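/- For the optimal weight vector w*_i = (1/k)[1 + d/2 - (d/(2 k^{2/d}))·α_i] (i = 1,...,k), one has k^{-2/d}·∑_{i=1}^k α_i w*_i → (d+2)/(d+4) as k → ∞. -/

import Mathlib

/-!
With `s = 1 + 2/d` the increments `α_i = i^s - (i-1)^s` telescope to `∑ α_i = k^s`, so the
expression equals `1 + d/2 - (d/2) k^{-(2s-1)} ∑ α_i²`. By the mean value theorem `α_{i+1}²` lies
between `s² i^{2(s-1)}` and `s² (i+1)^{2(s-1)}`, and comparing these sums with
`∫₀^k x^{2(s-1)} dx` gives `k^{-(2s-1)} ∑ α_i² → s²/(2s-1) = (d+2)²/(d(d+4))`.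
-/

open Filter Finset Topology Real

lemma Finset.sum_Icc_one_eq_sum_range {M : Type*} [AddCommMonoid M] (f : ℕ → M) (k : ℕ) :
    ∑ i ∈ Icc 1 k, f i = ∑ i ∈ range k, f (i + 1) := by
  rw [← Ico_add_one_right_eq_Icc, sum_Ico_eq_sum_range, add_tsub_cancel_right]
  simp only [add_comm]

namespace Real

lemma rpow_add_one_sub_rpow_mem_Icc {s x : ℝ} (hs : 1 ≤ s) (hx : 0 ≤ x) :
    (x + 1) ^ s - x ^ s ∈ Set.Icc (s * x ^ (s - 1)) (s * (x + 1) ^ (s - 1)) := by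
  obtain ⟨c, ⟨hxc, hcx⟩, hc⟩ := exists_hasDerivAt_eq_slope (fun t : ℝ => t ^ s)
    (fun t => s * t ^ (s - 1)) (lt_add_one x)
    (fun t _ => (hasDerivAt_rpow_const (Or.inr hs)).continuousAt.continuousWithinAt)
    (fun t _ => hasDerivAt_rpow_const (Or.inr hs))
  rw [add_sub_cancel_left, div_one] at hc
  rw [← hc]
  have hs0 : 0 ≤ s - 1 := by linarith
  exact ⟨by gcongr, by gcongr; linarith⟩

lemma sq_rpow_add_one_sub_rpow_mem_Icc {s x : ℝ} (hs : 1 ≤ s) (hx : 0 ≤ x) :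
    ((x + 1) ^ s - x ^ s) ^ 2 ∈
      Set.Icc (s ^ 2 * x ^ (2 * (s - 1))) (s ^ 2 * (x + 1) ^ (2 * (s - 1))) := by
  obtain ⟨hlo, hhi⟩ := rpow_add_one_sub_rpow_mem_Icc hs hx
  have hsq {y : ℝ} (hy : 0 ≤ y) : (s * y ^ (s - 1)) ^ 2 = s ^ 2 * y ^ (2 * (s - 1)) := by
    rw [mul_pow, mul_comm 2, rpow_mul hy, rpow_two]
  rw [← hsq hx, ← hsq (by linarith)]
  exact ⟨by gcongr, by gcongr; exact le_trans (by positivity) hlo⟩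

lemma sum_range_rpow_add_one_sub_rpow {s : ℝ} (hs : s ≠ 0) (k : ℕ) :
    ∑ i ∈ range k, (((i : ℝ) + 1) ^ s - (i : ℝ) ^ s) = (k : ℝ) ^ s := by
  simpa [zero_rpow hs] using sum_range_sub (fun i : ℕ => (i : ℝ) ^ s) k

lemma sum_range_rpow_le {t : ℝ} (ht : 0 ≤ t) (k : ℕ) :
    ∑ i ∈ range k, (i : ℝ) ^ t ≤ (k : ℝ) ^ (t + 1) / (t + 1) := by
  have := ((monotoneOn_rpow_Ici_of_exponent_nonneg ht).mono
    fun _ h => h.1).sum_le_integral (x₀ := 0) (a := k)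
  simpa [integral_rpow (Or.inl (by linarith : (-1 : ℝ) < t)), zero_rpow (by linarith : t + 1 ≠ 0)]
    using this

lemma le_sum_range_add_one_rpow {t : ℝ} (ht : 0 ≤ t) (k : ℕ) :
    (k : ℝ) ^ (t + 1) / (t + 1) ≤ ∑ i ∈ range k, ((i : ℝ) + 1) ^ t := by
  have := ((monotoneOn_rpow_Ici_of_exponent_nonneg ht).mono
    fun _ h => h.1).integral_le_sum (x₀ := 0) (a := k)
  simpa [integral_rpow (Or.inl (by linarith : (-1 : ℝ) < t)), zero_rpow (by linarith : t + 1 ≠ 0)]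
    using this

section SandwichedSum

variable {f : ℕ → ℝ} {a t : ℝ}

lemma abs_sum_range_sub_le_of_mem_Icc (ha : 0 ≤ a) (ht : 0 ≤ t)
    (hf : ∀ i : ℕ, f i ∈ Set.Icc (a * (i : ℝ) ^ t) (a * ((i : ℝ) + 1) ^ t)) (k : ℕ) :
    |∑ i ∈ range k, f i - a * ((k : ℝ) ^ (t + 1) / (t + 1))| ≤ a * (k : ℝ) ^ t := by
  have hshift :
      ∑ i ∈ range k, ((i : ℝ) + 1) ^ t ≤ ∑ i ∈ range k, (i : ℝ) ^ t + (k : ℝ) ^ t := by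
    have := sum_range_sub (fun i : ℕ => (i : ℝ) ^ t) k
    push_cast at this
    rw [sum_sub_distrib] at this
    linarith [rpow_nonneg (le_refl (0 : ℝ)) t]
  have hlo : a * ∑ i ∈ range k, (i : ℝ) ^ t ≤ ∑ i ∈ range k, f i := by
    rw [mul_sum]; exact sum_le_sum fun i _ => (hf i).1
  have hhi : ∑ i ∈ range k, f i ≤ a * ∑ i ∈ range k, ((i : ℝ) + 1) ^ t := by
    rw [mul_sum]; exact sum_le_sum fun i _ => (hf i).2
  have h₁ := mul_le_mul_of_nonneg_left (sum_range_rpow_le ht k) ha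
  have h₂ := mul_le_mul_of_nonneg_left (le_sum_range_add_one_rpow ht k) ha
  have h₃ := mul_le_mul_of_nonneg_left hshift ha
  rw [abs_sub_le_iff]
  constructor <;> nlinarith

lemma tendsto_sum_range_div_rpow_of_mem_Icc (ha : 0 ≤ a) (ht : 0 ≤ t)
    (hf : ∀ i : ℕ, f i ∈ Set.Icc (a * (i : ℝ) ^ t) (a * ((i : ℝ) + 1) ^ t)) :
    Tendsto (fun k : ℕ => (∑ i ∈ range k, f i) / (k : ℝ) ^ (t + 1)) atTop
      (𝓝 (a / (t + 1))) := by
  rw [tendsto_iff_norm_sub_tendsto_zero]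
  refine squeeze_zero' (.of_forall fun _ => norm_nonneg _) ?_
    (tendsto_const_div_atTop_nhds_zero_nat a)
  filter_upwards [eventually_gt_atTop 0] with k hk
  have hk : (0 : ℝ) < k := Nat.cast_pos.mpr hk
  calc ‖(∑ i ∈ range k, f i) / (k : ℝ) ^ (t + 1) - a / (t + 1)‖
      = |(∑ i ∈ range k, f i - a * ((k : ℝ) ^ (t + 1) / (t + 1))) / (k : ℝ) ^ (t + 1)| := by
        rw [Real.norm_eq_abs]
        congr 1
        field_simp
    _ = |∑ i ∈ range k, f i - a * ((k : ℝ) ^ (t + 1) / (t + 1))| / ((k : ℝ) ^ t * k) := by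
        rw [abs_div, abs_of_pos (rpow_pos_of_pos hk _), rpow_add_one hk.ne']
    _ ≤ a * (k : ℝ) ^ t / ((k : ℝ) ^ t * k) := by
        gcongr; exact abs_sum_range_sub_le_of_mem_Icc ha ht hf k
    _ = a / k := by field_simp

end SandwichedSum

lemma sum_Icc_rpow_increment_mul_weight_div_rpow {c r : ℝ} (hr : 1 + r ≠ 0) {k : ℕ}
    (hk : 0 < k) :
    (∑ i ∈ Icc 1 k, ((i : ℝ) ^ (1 + r) - ((i : ℝ) - 1) ^ (1 + r)) *
        ((1 / (k : ℝ)) * (1 + c / 2 - (c / (2 * (k : ℝ) ^ r)) *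
          ((i : ℝ) ^ (1 + r) - ((i : ℝ) - 1) ^ (1 + r))))) / (k : ℝ) ^ r =
      1 + c / 2 - c / 2 *
        ((∑ i ∈ range k, (((i : ℝ) + 1) ^ (1 + r) - (i : ℝ) ^ (1 + r)) ^ 2) /
          (k : ℝ) ^ (2 * r + 1)) := by
  have hk : (0 : ℝ) < k := Nat.cast_pos.mpr hk
  rw [sum_Icc_one_eq_sum_range]
  push_cast
  simp only [add_sub_cancel_right]
  have hsummand : ∀ x : ℝ, x * (1 / (k : ℝ) * (1 + c / 2 - c / (2 * (k : ℝ) ^ r) * x)) =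
      (1 + c / 2) / k * x - c / (2 * (k : ℝ) ^ r * k) * x ^ 2 := fun x => by ring
  rw [sum_congr rfl fun i _ => hsummand _, sum_sub_distrib, ← mul_sum, ← mul_sum,
    sum_range_rpow_add_one_sub_rpow hr, rpow_add hk, rpow_one, rpow_add_one hk.ne',
    two_mul r, rpow_add hk]
  field_simp

end Real

theorem opt_weights_alpha_sum_limit (d : ℕ) (hd : 0 < d) :
    Tendsto (fun k : ℕ =>
      (∑ i ∈ Finset.Icc 1 k,
        ((i : ℝ) ^ (1 + 2 / (d : ℝ)) - ((i : ℝ) - 1) ^ (1 + 2 / (d : ℝ))) *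
        ((1 / (k : ℝ)) * (1 + (d : ℝ) / 2 -
          ((d : ℝ) / (2 * (k : ℝ) ^ (2 / (d : ℝ)))) *
            ((i : ℝ) ^ (1 + 2 / (d : ℝ)) - ((i : ℝ) - 1) ^ (1 + 2 / (d : ℝ))))))
        / (k : ℝ) ^ (2 / (d : ℝ)))
      atTop (nhds (((d : ℝ) + 2) / ((d : ℝ) + 4))) := by
  have hsq := tendsto_sum_range_div_rpow_of_mem_Icc (sq_nonneg (1 + 2 / (d : ℝ)))
    (by positivity : (0 : ℝ) ≤ 2 * (2 / d)) fun i => by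
      simpa only [add_sub_cancel_left] using
        sq_rpow_add_one_sub_rpow_mem_Icc (s := 1 + 2 / (d : ℝ))
          (le_add_of_nonneg_right (by positivity)) i.cast_nonneg
  have hval : 1 + (d : ℝ) / 2 - d / 2 * ((1 + 2 / d) ^ 2 / (2 * (2 / d) + 1)) =
      (d + 2) / (d + 4) := by
    field_simp
    ring
  rw [← hval]
  refine (tendsto_const_nhds.sub (hsq.const_mul _)).congr' ?_
  filter_upwards [eventually_gt_atTop 0] with k hk
  exact (sum_Icc_rpow_increment_mul_weight_div_rpow (by positivity) hk).symm
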